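/- Let J ≥ 2 be an integer and λ ≥ 0 a real number. Let K be a J×J real positive semidefinite matrix with strictly positive diagonal entries, let P₁ ≥ K₁₁ be a real number, and let K′ = K + (P₁ − K₁₁)·e₁e₁ᵀ (i.e., K′ agrees with K except that its (1,1) entry is P₁). Then K′ is positive semidefinite and h(λ, K′) ≤ h(λ, K). -/

import Mathlib

/-! Adding `c ≥ 0` to `K₁₁` raises `S = ∑ K` by `c`, raises each conditional variance
`S - (∑ₖ Kⱼₖ)² / Kⱼⱼ` with `j ≠ 1` by `c` as well, and does not lower the one with `j = 1`
(this reduces to `c (K₁₁ - ∑ₖ K₁ₖ)² ≥ 0`). By concavity of `log`, `log (a + c) - log a` is at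
least `L = log (1 + S + c) - log (1 + S)` whenever `a ≤ 1 + S`, so the sum of the `J`
logarithms in `h` grows by at least `(J - 1) L`, and `h` changes by at most
`((λ - 1) / 2) L - (λ / 2) L ≤ 0`. -/

open Finset

/-- The function `h(λ, K)` from the dependence-balance bound:
`h(λ, K) = ((λ−1)/2)·log(1 + Σ_{j,k} K_{jk})
  − (λ/(2(J−1)))·Σ_j log(1 + Σ_{ℓ,k} K_{ℓk} − (Σ_k K_{jk})²/K_{jj})`. -/
noncomputable def hFun (J : ℕ) (lam : ℝ) (K : Matrix (Fin J) (Fin J) ℝ) : ℝ :=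
  ((lam - 1) / 2) * Real.log (1 + ∑ l : Fin J, ∑ k : Fin J, K l k)
    - (lam / (2 * ((J : ℝ) - 1))) *
      ∑ j : Fin J, Real.log (1 + (∑ l : Fin J, ∑ k : Fin J, K l k)
        - (∑ k : Fin J, K j k) ^ 2 / K j j)

theorem Real.log_add_sub_log_le_of_le {a b c : ℝ} (ha : 0 < a) (hab : a ≤ b) (hc : 0 ≤ c) :
    Real.log (b + c) - Real.log b ≤ Real.log (a + c) - Real.log a := by
  have hb : 0 < b := ha.trans_le hab
  rw [← Real.log_div (by positivity) hb.ne', ← Real.log_div (by positivity) ha.ne']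
  refine Real.log_le_log (by positivity) ?_
  rw [div_le_div_iff₀ hb ha]
  nlinarith [mul_le_mul_of_nonneg_left hab hc]

theorem add_sq_div_add_le {r c d : ℝ} (hd : 0 < d) (hc : 0 ≤ c) :
    (r + c) ^ 2 / (d + c) ≤ c + r ^ 2 / d := by
  rw [add_div' _ _ _ hd.ne', div_le_div_iff₀ (by positivity) hd]
  nlinarith [mul_nonneg hc (sq_nonneg (d - r))]

namespace Matrix

variable {n : Type*}

theorem posSemidef_single [DecidableEq n] (i : n) {c : ℝ} (hc : 0 ≤ c) :
    (single i i c).PosSemidef := by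
  simpa [diagonal_single] using PosSemidef.diagonal (Pi.single_nonneg.2 hc : 0 ≤ Pi.single i c)

variable [Fintype n]

/-- For a Gaussian vector `X` with covariance `K`, `entrySum K = Var(∑ᵢ Xᵢ)` and
`condVarSum K j = Var(∑ᵢ Xᵢ | Xⱼ)`. -/
noncomputable def entrySum (K : Matrix n n ℝ) : ℝ := ∑ l, ∑ k, K l k

noncomputable def condVarSum (K : Matrix n n ℝ) (j : n) : ℝ :=
  K.entrySum - (∑ k, K j k) ^ 2 / K j j

theorem PosSemidef.entrySum_nonneg {K : Matrix n n ℝ} (hK : K.PosSemidef) : 0 ≤ K.entrySum := by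
  simpa [entrySum, dotProduct, mulVec, mul_sum] using hK.dotProduct_mulVec_nonneg 1

theorem PosSemidef.sq_sum_row_le [DecidableEq n] {K : Matrix n n ℝ} (hK : K.PosSemidef) (j : n) :
    (∑ k, K j k) ^ 2 ≤ K j j * K.entrySum := by
  have h := LinearMap.BilinForm.apply_mul_apply_le_of_forall_zero_le (toLinearMap₂' ℝ K)
    (fun x => by simpa [toLinearMap₂'_apply'] using hK.dotProduct_mulVec_nonneg x)
    (Pi.single j 1) 1
  have hcol : ∑ l, K l j = ∑ k, K j k :=
    sum_congr rfl fun l _ => by simpa using hK.1.apply j l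
  simpa [entrySum, toLinearMap₂'_apply', mulVec, dotProduct, Pi.single_apply, hcol, ← sq] using h

theorem PosSemidef.condVarSum_nonneg [DecidableEq n] {K : Matrix n n ℝ} (hK : K.PosSemidef)
    {j : n} (hj : 0 < K j j) : 0 ≤ K.condVarSum j := by
  rw [condVarSum, sub_nonneg, div_le_iff₀' hj]
  exact hK.sq_sum_row_le j

theorem condVarSum_le_entrySum {K : Matrix n n ℝ} {j : n} (hj : 0 ≤ K j j) :
    K.condVarSum j ≤ K.entrySum :=
  sub_le_self _ (div_nonneg (sq_nonneg _) hj)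

variable [DecidableEq n] (K : Matrix n n ℝ) (i : n) (c : ℝ)

theorem sum_row_add_single (j : n) :
    ∑ k, (K + single i i c) j k = ∑ k, K j k + if j = i then c else 0 := by
  simp [sum_add_distrib, single_apply, ite_and, eq_comm]

theorem entrySum_add_single : (K + single i i c).entrySum = K.entrySum + c := by
  simp only [entrySum, sum_row_add_single, sum_add_distrib, sum_ite_eq', mem_univ, if_true]

theorem condVarSum_add_single_of_ne {j : n} (hj : j ≠ i) :
    (K + single i i c).condVarSum j = K.condVarSum j + c := by
  rw [condVarSum, condVarSum, entrySum_add_single, sum_row_add_single, if_neg hj, add_apply,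
    single_apply, if_neg (by simp [Ne.symm hj])]
  ring

theorem condVarSum_le_condVarSum_add_single_self {K : Matrix n n ℝ} (hi : 0 < K i i) (hc : 0 ≤ c) :
    K.condVarSum i ≤ (K + single i i c).condVarSum i := by
  rw [condVarSum, condVarSum, entrySum_add_single, sum_row_add_single, if_pos rfl, add_apply,
    single_apply_same]
  linarith [add_sq_div_add_le (r := ∑ k, K i k) hi hc]

theorem PosSemidef.sum_log_one_add_condVarSum_add_single {K : Matrix n n ℝ} (hK : K.PosSemidef)
    (hdiag : ∀ j, 0 < K j j) {c : ℝ} (hc : 0 ≤ c) :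
    ∑ j, Real.log (1 + K.condVarSum j) + ((Fintype.card n : ℝ) - 1) *
        (Real.log (1 + (K + single i i c).entrySum) - Real.log (1 + K.entrySum))
      ≤ ∑ j, Real.log (1 + (K + single i i c).condVarSum j) := by
  rw [entrySum_add_single]
  set L := Real.log (1 + (K.entrySum + c)) - Real.log (1 + K.entrySum)
  have hcard : ((Fintype.card n : ℝ) - 1) * L = ∑ j ∈ univ.erase i, L := by
    rw [sum_const, card_erase_of_mem (mem_univ i), card_univ, nsmul_eq_mul,
      Nat.cast_pred (Fintype.card_pos_iff.2 ⟨i⟩)]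
  rw [← add_sum_erase _ _ (mem_univ i), ← add_sum_erase _ _ (mem_univ i), hcard, add_assoc,
    ← sum_add_distrib]
  refine add_le_add ?_ (sum_le_sum fun j hj => ?_)
  · have := hK.condVarSum_nonneg (hdiag i)
    exact Real.log_le_log (by positivity)
      (by linarith [condVarSum_le_condVarSum_add_single_self i c (hdiag i) hc])
  · have hconcave :=
      Real.log_add_sub_log_le_of_le (a := 1 + K.condVarSum j) (b := 1 + K.entrySum)
      (by linarith [hK.condVarSum_nonneg (hdiag j)])
      (by linarith [condVarSum_le_entrySum (hdiag j).le]) hc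
    simp only [add_assoc] at hconcave
    rw [condVarSum_add_single_of_ne _ _ _ (ne_of_mem_erase hj)]
    linarith

end Matrix

theorem hFun_eq (J : ℕ) (lam : ℝ) (K : Matrix (Fin J) (Fin J) ℝ) :
    hFun J lam K = (lam - 1) / 2 * Real.log (1 + K.entrySum)
      - lam / (2 * ((J : ℝ) - 1)) * ∑ j, Real.log (1 + K.condVarSum j) := by
  simp only [hFun, Matrix.entrySum, Matrix.condVarSum, add_sub_assoc]

theorem hFun_add_single_le {J : ℕ} (hJ : 2 ≤ J) {lam : ℝ} (hlam : 0 ≤ lam)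
    {K : Matrix (Fin J) (Fin J) ℝ} (hK : K.PosSemidef) (hdiag : ∀ j, 0 < K j j) (i : Fin J)
    {c : ℝ} (hc : 0 ≤ c) :
    hFun J lam (K + Matrix.single i i c) ≤ hFun J lam K := by
  have hJ1 : (0 : ℝ) < J - 1 := by
    have : (2 : ℝ) ≤ J := by exact_mod_cast hJ
    linarith
  have hsum := mul_le_mul_of_nonneg_left (hK.sum_log_one_add_condVarSum_add_single i hdiag hc)
    (by positivity : 0 ≤ lam / (2 * ((J : ℝ) - 1)))
  rw [Fintype.card_fin, Matrix.entrySum_add_single] at hsum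
  rw [hFun_eq, hFun_eq, Matrix.entrySum_add_single]
  set L := Real.log (1 + (K.entrySum + c)) - Real.log (1 + K.entrySum)
  have hL : 0 ≤ L := sub_nonneg.2 <|
    Real.log_le_log (by linarith [hK.entrySum_nonneg]) (by linarith)
  have hcoef : lam / (2 * ((J : ℝ) - 1)) * (((J : ℝ) - 1) * L) = lam / 2 * L := by
    field_simp
  have hlog : Real.log (1 + (K.entrySum + c)) = Real.log (1 + K.entrySum) + L := by ring
  rw [mul_add, hcoef] at hsum
  rw [hlog]
  linarith

/-- Let `J ≥ 2`, `λ ≥ 0`, `K` a `J×J` real positive semidefinite matrix with strictly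
positive diagonal entries, `P₁ ≥ K₁₁`, and `K′ = K + (P₁ − K₁₁)·e₁e₁ᵀ`. Then `K′` is
positive semidefinite and `h(λ, K′) ≤ h(λ, K)`. -/
theorem stmt_8 (J : ℕ) (hJ : 2 ≤ J) (lam : ℝ) (hlam : 0 ≤ lam)
    (K : Matrix (Fin J) (Fin J) ℝ) (hpsd : K.PosSemidef)
    (hdiag : ∀ j : Fin J, 0 < K j j)
    (P₁ : ℝ) (hP₁ : K ⟨0, by omega⟩ ⟨0, by omega⟩ ≤ P₁) :
    (K + Matrix.single (⟨0, by omega⟩ : Fin J) (⟨0, by omega⟩ : Fin J)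
        (P₁ - K ⟨0, by omega⟩ ⟨0, by omega⟩)).PosSemidef ∧
      hFun J lam (K + Matrix.single (⟨0, by omega⟩ : Fin J) (⟨0, by omega⟩ : Fin J)
          (P₁ - K ⟨0, by omega⟩ ⟨0, by omega⟩))
        ≤ hFun J lam K := by
  have hc : 0 ≤ P₁ - K ⟨0, by omega⟩ ⟨0, by omega⟩ := sub_nonneg.2 hP₁
  exact ⟨hpsd.add (Matrix.posSemidef_single _ hc),
    hFun_add_single_le hJ hlam hpsd hdiag _ hc⟩
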